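/- arXiv:1207.5764 — 2 statements merged into one kernel-verified Lean document; each statement's English description precedes it below -/
import Mathlib

section
/- For every integer m ≥ 0 and every nonzero complex number x, one has |F_m(x)|² = F_m(x)·F_m(x̄) < F_m(0)·F_m(x+x̄), where F_m(t) = ∫₀¹ e^{ty} y^m dy. -/
/-!
Let `ν` be the measure `y^m dy` on `(0, 1]`. Then `F_m(t) = ∫ e^{ty} dν`, `F_m(0) = ν(ℝ)` and
`F_m(x + x̄) = ∫ |e^{xy}|² dν`, so the inequality is Cauchy–Schwarz in `L²(ν)` for `e^{xy}` and `1`.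
Equality would force `e^{xy}` to be `ν`-a.e. constant, but for `x ≠ 0` every level set of
`y ↦ e^{xy}` on `ℝ` is countable, hence `ν`-null.
-/

open MeasureTheory Set Complex Filter ComplexConjugate

/-- `F m t = ∫₀¹ e^{t y} y^m dy`. -/
noncomputable def F (m : ℕ) (t : ℂ) : ℂ := ∫ y in (0:ℝ)..1, Complex.exp (t * y) * (y : ℂ) ^ m

section StrictCauchySchwarz

variable {α 𝕜 : Type*} [RCLike 𝕜] [MeasurableSpace α] {μ : Measure α}

theorem MeasureTheory.MemLp.norm_toLp_sq {f : α → 𝕜} (hf : MemLp f 2 μ) :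
    ‖hf.toLp f‖ ^ 2 = ∫ a, ‖f a‖ ^ 2 ∂μ := by
  rw [Lp.norm_toLp, hf.eLpNorm_eq_integral_rpow_norm two_ne_zero ENNReal.ofNat_ne_top,
    ENNReal.toReal_ofReal (by positivity)]
  simp only [ENNReal.toReal_ofNat, Real.rpow_ofNat]
  rw [← Real.rpow_natCast, ← Real.rpow_mul (integral_nonneg fun _ => by positivity)]
  norm_num

theorem norm_integral_sq_lt_of_forall_not_ae_eq_const [IsFiniteMeasure μ] {f : α → 𝕜}
    (hf : MemLp f 2 μ) (hf_const : ∀ c : 𝕜, ¬ f =ᵐ[μ] fun _ => c) :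
    ‖∫ a, f a ∂μ‖ ^ 2 < μ.real univ * ∫ a, ‖f a‖ ^ 2 ∂μ := by
  set one := indicatorConstLp 2 MeasurableSet.univ (measure_ne_top μ univ) (1 : 𝕜)
  have h_one : ⇑one =ᵐ[μ] fun _ => 1 :=
    indicatorConstLp_coeFn.trans (.of_eq (indicator_univ _))
  have h_inner : inner 𝕜 one (hf.toLp f) = ∫ a, f a ∂μ := by
    rw [L2.inner_indicatorConstLp_one, Measure.restrict_univ]
    exact integral_congr_ae hf.coeFn_toLp
  have h_norm_one : ‖one‖ ^ 2 = μ.real univ := by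
    rw [norm_indicatorConstLp two_ne_zero ENNReal.ofNat_ne_top]
    simp only [norm_one, one_mul, ENNReal.toReal_ofNat]
    rw [← Real.rpow_natCast, ← Real.rpow_mul measureReal_nonneg]
    norm_num
  rw [← h_inner, ← h_norm_one, ← hf.norm_toLp_sq, ← mul_pow]
  refine pow_lt_pow_left₀ ((norm_inner_le_norm _ _).lt_of_ne fun h_eq => ?_)
    (norm_nonneg _) two_ne_zero
  rcases ((norm_inner_eq_norm_tfae (𝕜 := 𝕜) one (hf.toLp f)).out 0 2).mp h_eq
    with h_zero | ⟨r, hr⟩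
  · refine hf_const 0 ?_
    have h_one_zero : ⇑one =ᵐ[μ] 0 := h_zero ▸ Lp.coeFn_zero 𝕜 2 μ
    filter_upwards [h_one, h_one_zero] with a h1 h0
    exact absurd (h1.symm.trans h0) one_ne_zero
  · refine hf_const r ?_
    filter_upwards [hf.coeFn_toLp, Lp.coeFn_smul r one, h_one] with a hfa hsmul h1
    rw [← hfa, hr, hsmul, Pi.smul_apply, h1, smul_eq_mul, mul_one]

end StrictCauchySchwarz

noncomputable def powWeight (m : ℕ) : Measure ℝ :=
  (volume.restrict (Ioc 0 1)).withDensity fun y => ENNReal.ofReal (y ^ m)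

namespace powWeight
variable (m : ℕ)

instance : IsFiniteMeasure (powWeight m) :=
  isFiniteMeasure_withDensity_ofReal ((continuous_pow m).integrableOn_Ioc).hasFiniteIntegral

theorem ae_mem_Ioc : ∀ᵐ y ∂powWeight m, y ∈ Ioc (0 : ℝ) 1 :=
  (withDensity_absolutelyContinuous _ _).ae_le (ae_restrict_mem measurableSet_Ioc)

theorem integral_eq_setIntegral_mul_pow (g : ℝ → ℂ) :
    ∫ y, g y ∂powWeight m = ∫ y in Ioc 0 1, g y * (y : ℂ) ^ m := by
  rw [powWeight, integral_withDensity_eq_integral_toReal_smul (by fun_prop)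
    (ae_of_all _ fun _ => ENNReal.ofReal_lt_top)]
  refine setIntegral_congr_fun measurableSet_Ioc fun y hy => ?_
  rw [ENNReal.toReal_ofReal (pow_nonneg hy.1.le m), Complex.real_smul, mul_comm]
  push_cast
  rfl

theorem not_ae_eq_const_of_countable_fiber {g : ℝ → ℂ} (hg : ∀ c, {y | g y = c}.Countable)
    (c : ℂ) : ¬ g =ᵐ[powWeight m] fun _ => c := by
  intro h
  rw [EventuallyEq, powWeight, ae_withDensity_iff (by fun_prop),
    ae_restrict_iff' measurableSet_Ioc] at h
  have h_null : volume (Ioc (0 : ℝ) 1) = 0 := by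
    rw [measure_eq_zero_iff_ae_notMem]
    filter_upwards [h, (hg c).ae_notMem volume] with y hy h_fiber h_mem
    exact h_fiber (hy h_mem (ENNReal.ofReal_pos.2 (pow_pos h_mem.1 m)).ne')
  simp at h_null

end powWeight

theorem countable_setOf_cexp_mul_ofReal_eq {x : ℂ} (hx : x ≠ 0) (c : ℂ) :
    {y : ℝ | cexp (x * y) = c}.Countable :=
  ((countable_singleton c).preimage_cexp).preimage fun a b hab => by
    exact_mod_cast mul_left_cancel₀ hx hab

theorem F_eq_integral_powWeight (m : ℕ) (t : ℂ) : F m t = ∫ y, cexp (t * y) ∂powWeight m := by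
  rw [powWeight.integral_eq_setIntegral_mul_pow, F, intervalIntegral.integral_of_le zero_le_one]

theorem F_conj (m : ℕ) (x : ℂ) : F m (conj x) = conj (F m x) := by
  simp only [F_eq_integral_powWeight, ← integral_conj, map_mul, ← Complex.exp_conj, conj_ofReal]

theorem F_zero (m : ℕ) : F m 0 = (powWeight m).real univ := by
  simp [F_eq_integral_powWeight]

theorem F_add_conj (m : ℕ) (x : ℂ) :
    F m (x + conj x) = ∫ y, ‖cexp (x * y)‖ ^ 2 ∂powWeight m := by
  rw [F_eq_integral_powWeight, ← integral_complex_ofReal]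
  congr 1 with y
  push_cast
  rw [← mul_conj', ← Complex.exp_conj, ← Complex.exp_add, map_mul, conj_ofReal, add_mul]

theorem memLp_cexp_mul_powWeight (m : ℕ) (x : ℂ) :
    MemLp (fun y : ℝ => cexp (x * y)) 2 (powWeight m) := by
  refine MemLp.of_bound (by fun_prop) (Real.exp ‖x‖) ?_
  filter_upwards [powWeight.ae_mem_Ioc m] with y hy
  refine (norm_exp_le_exp_norm _).trans (Real.exp_le_exp.2 ?_)
  rw [norm_mul, norm_real, Real.norm_of_nonneg hy.1.le]
  exact mul_le_of_le_one_right (norm_nonneg x) hy.2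

/-- For every `m ≥ 0` and nonzero complex `x`,
`|F_m(x)|² = F_m(x)·F_m(x̄) < F_m(0)·F_m(x+x̄)`. -/
theorem stmt0 (m : ℕ) (x : ℂ) (hx : x ≠ 0) :
    F m x * F m (starRingEnd ℂ x) = (‖F m x‖ ^ 2 : ℝ) ∧
    ‖F m x‖ ^ 2 < (F m 0 * F m (x + starRingEnd ℂ x)).re := by
  refine ⟨by rw [F_conj, mul_conj', ofReal_pow], ?_⟩
  rw [F_zero, F_add_conj, ← ofReal_mul, ofReal_re, F_eq_integral_powWeight]
  exact norm_integral_sq_lt_of_forall_not_ae_eq_const (memLp_cexp_mul_powWeight m x)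
    (powWeight.not_ae_eq_const_of_countable_fiber m (countable_setOf_cexp_mul_ofReal_eq hx))
end

section
/- For every nonzero complex x and integer m ≥ 0, the 2×2 matrix G_m(x) = [[F_m(x+x̄), F_m(x)], [F_m(x̄), F_m(0)]] is invertible, where F_m(t) = ∫₀¹ e^{ty} y^m dy. -/
/-!
`G_m(x)` is the Gram matrix of `y ↦ e^{x̄ y}` and `y ↦ 1` in `L²((0, 1], y^m dy)`, because
`⟪e^{a y}, e^{b y}⟫ = F_m(ā + b)`. For `x ≠ 0` these two functions are linearly independent: a
relation `s e^{x̄ y} + t = 0` on `(0, 1)` has zero derivative `s x̄ e^{x̄ y}`, forcing `s = 0` and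
then `t = 0`. A Gram matrix of linearly independent vectors is positive definite, hence invertible.
-/

open MeasureTheory Complex Set Filter Topology Matrix
open scoped ComplexConjugate ComplexOrder InnerProductSpace

noncomputable def weightedMeasure (m : ℕ) : Measure ℝ :=
  (volume.restrict (Ioc (0:ℝ) 1)).withDensity fun y => ENNReal.ofReal (y ^ m)

instance (m : ℕ) : IsFiniteMeasure (weightedMeasure m) :=
  isFiniteMeasure_withDensity_ofReal
    (intervalIntegral.intervalIntegrable_pow (a := 0) (b := 1) m).1.hasFiniteIntegral

lemma ae_mem_Ioc_weightedMeasure (m : ℕ) : ∀ᵐ y ∂(weightedMeasure m), y ∈ Ioc (0:ℝ) 1 :=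
  (withDensity_absolutelyContinuous _ _).ae_le (ae_restrict_mem measurableSet_Ioc)

lemma eqOn_Ioo_of_ae_eq_weightedMeasure {m : ℕ} {f g : ℝ → ℂ} (hf : Continuous f)
    (hg : Continuous g) (h : f =ᵐ[weightedMeasure m] g) : EqOn f g (Ioo 0 1) := by
  rw [EventuallyEq, weightedMeasure, ae_withDensity_iff (by fun_prop)] at h
  refine Measure.eqOn_open_of_ae_eq (μ := volume) ?_ isOpen_Ioo hf.continuousOn hg.continuousOn
  filter_upwards [ae_restrict_of_ae_restrict_of_subset Ioo_subset_Ioc_self h,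
    ae_restrict_mem measurableSet_Ioo] with y hy hy_mem
  exact hy (ENNReal.ofReal_pos.mpr (pow_pos hy_mem.1 m)).ne'

lemma F_eq_integral_weightedMeasure (m : ℕ) (t : ℂ) :
    F m t = ∫ y, exp (t * y) ∂(weightedMeasure m) := by
  rw [F, intervalIntegral.integral_of_le zero_le_one, weightedMeasure,
    integral_withDensity_eq_integral_toReal_smul (by fun_prop)
      (ae_of_all _ fun _ => ENNReal.ofReal_lt_top)]
  refine setIntegral_congr_fun measurableSet_Ioc fun y hy => ?_
  rw [ENNReal.toReal_ofReal (pow_nonneg hy.1.le m), real_smul, mul_comm]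
  push_cast
  rfl

lemma memLp_cexp_mul (m : ℕ) (c : ℂ) :
    MemLp (fun y : ℝ => exp (c * y)) 2 (weightedMeasure m) := by
  refine MemLp.of_bound (by fun_prop) (Real.exp ‖c‖) ?_
  filter_upwards [ae_mem_Ioc_weightedMeasure m] with y hy
  calc ‖exp (c * y)‖ ≤ Real.exp ‖c * y‖ := norm_exp_le_exp_norm _
    _ ≤ Real.exp ‖c‖ := by
      gcongr
      rw [norm_mul, norm_real, Real.norm_of_nonneg hy.1.le]
      exact mul_le_of_le_one_right (norm_nonneg c) hy.2

noncomputable def expLp (m : ℕ) (c : ℂ) : Lp ℂ 2 (weightedMeasure m) :=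
  (memLp_cexp_mul m c).toLp _

lemma coeFn_expLp (m : ℕ) (c : ℂ) : expLp m c =ᵐ[weightedMeasure m] fun y => exp (c * y) :=
  (memLp_cexp_mul m c).coeFn_toLp

lemma inner_expLp (m : ℕ) (a b : ℂ) : ⟪expLp m a, expLp m b⟫_ℂ = F m (conj a + b) := by
  rw [L2.inner_def, F_eq_integral_weightedMeasure]
  refine integral_congr_ae ?_
  filter_upwards [coeFn_expLp m a, coeFn_expLp m b] with y ha hb
  rw [ha, hb, RCLike.inner_apply, ← exp_conj, ← exp_add, map_mul, conj_ofReal, add_mul,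
    add_comm]

lemma eq_zero_of_eventually_mul_cexp_add_eq_zero {c s t : ℂ} {y₀ : ℝ} (hc : c ≠ 0)
    (h : ∀ᶠ y : ℝ in 𝓝 y₀, s * exp (c * y) + t = 0) : s = 0 := by
  have hderiv :
      HasDerivAt (fun w : ℂ => s * exp (c * w) + t) (s * (exp (c * y₀) * c)) y₀ := by
    simpa using (((hasDerivAt_id (y₀ : ℂ)).const_mul c).cexp.const_mul s).add_const t
  have := hderiv.comp_ofReal.unique ((hasDerivAt_const y₀ (0:ℂ)).congr_of_eventuallyEq h)
  simpa [hc, exp_ne_zero] using this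

lemma linearIndependent_expLp (m : ℕ) {c : ℂ} (hc : c ≠ 0) :
    LinearIndependent ℂ ![expLp m c, expLp m 0] := by
  refine LinearIndependent.pair_iff.mpr fun s t hst => ?_
  have hae : (fun y : ℝ => s * exp (c * y) + t) =ᵐ[weightedMeasure m] fun _ => 0 := by
    have hzero : ⇑(s • expLp m c + t • expLp m 0) =ᵐ[weightedMeasure m] 0 := by
      rw [hst]; exact Lp.coeFn_zero _ _ _
    filter_upwards [hzero, Lp.coeFn_add (s • expLp m c) (t • expLp m 0),
      Lp.coeFn_smul s (expLp m c), Lp.coeFn_smul t (expLp m 0), coeFn_expLp m c,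
      coeFn_expLp m 0] with y hsum hadd hs ht hexp hone
    simp_all
  have hs : s = 0 := eq_zero_of_eventually_mul_cexp_add_eq_zero (y₀ := 1 / 2) hc <|
    eventually_of_mem (Ioo_mem_nhds (by norm_num : (0:ℝ) < 1 / 2) (by norm_num))
      (eqOn_Ioo_of_ae_eq_weightedMeasure (by fun_prop) (by fun_prop) hae)
  refine ⟨hs, ?_⟩
  simpa [hs] using eqOn_Ioo_of_ae_eq_weightedMeasure (by fun_prop) (by fun_prop) hae
    (show (1 / 2 : ℝ) ∈ Ioo 0 1 by norm_num)

/-- For nonzero `x`, the matrix `G_m(x) = [[F_m(x+x̄), F_m(x)],[F_m(x̄), F_m(0)]]` is invertible. -/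
theorem stmt3 (m : ℕ) (x : ℂ) (hx : x ≠ 0) :
    IsUnit (!![F m (x + starRingEnd ℂ x), F m x; F m (starRingEnd ℂ x), F m 0]) := by
  have hG : !![F m (x + conj x), F m x; F m (conj x), F m 0]
      = gram ℂ ![expLp m (conj x), expLp m 0] := by
    ext i j
    fin_cases i <;> fin_cases j <;> simp [gram_apply, inner_expLp, -inner_self_eq_norm_sq_to_K]
  have hindep := linearIndependent_expLp m ((map_ne_zero (starRingEnd ℂ)).mpr hx)
  rw [hG]
  exact (posDef_gram_of_linearIndependent hindep).isUnit
end
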